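/- Let Q be a positive definite quadratic form with Q(b) = 1 and Q(a) = 1, a + b ≠ 0. Then φ_{a+b,Q}(-b) = a/Q(a) = a, where φ_{c,Q}(x) = (c·Q(x) + x)/(Q(x)·Q(c) + B(x,c) + 1). -/

import Mathlib

/-- The basic map `φ_{c,Q}(x) = (c·Q(x) + x) / (Q(x)·Q(c) + B(x,c) + 1)`, where
`B(x,y) = Q(x+y) - Q(x) - Q(y)` is the bilinear form associated to `Q`. -/
noncomputable def phiAQ {k : ℕ} (Q : QuadraticForm ℝ (Fin k → ℝ)) (c x : Fin k → ℝ) :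
    Fin k → ℝ :=
  (Q x * Q c + (Q (x + c) - Q x - Q c) + 1)⁻¹ • (Q x • c + x)

theorem QuadraticMap.mul_add_polar_add_one_of_map_eq_one {R M : Type*} [CommRing R]
    [AddCommGroup M] [Module R M] (Q : QuadraticForm R M) {c x : M} (hx : Q x = 1) :
    Q x * Q c + (Q (x + c) - Q x - Q c) + 1 = Q (x + c) := by
  rw [hx]; ring

theorem phiAQ_of_map_eq_one {k : ℕ} (Q : QuadraticForm ℝ (Fin k → ℝ)) {c x : Fin k → ℝ}
    (hx : Q x = 1) : phiAQ Q c x = (Q (x + c))⁻¹ • (x + c) := by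
  rw [phiAQ, Q.mul_add_polar_add_one_of_map_eq_one hx, hx, one_smul, add_comm c]

theorem stmt10_general {k : ℕ} (Q : QuadraticForm ℝ (Fin k → ℝ))
    (a b : Fin k → ℝ) (ha : Q a = 1) (hb : Q b = 1) :
    (Q (-b) * Q (a + b) + (Q (-b + (a + b)) - Q (-b) - Q (a + b)) + 1 ≠ 0) ∧
    phiAQ Q (a + b) (-b) = a := by
  have hnegb : Q (-b) = 1 := by rw [QuadraticMap.map_neg, hb]
  have hsum : -b + (a + b) = a := by abel
  constructor
  · rw [Q.mul_add_polar_add_one_of_map_eq_one hnegb, hsum, ha]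
    exact one_ne_zero
  · rw [phiAQ_of_map_eq_one Q hnegb, hsum, ha, inv_one, one_smul]

theorem stmt10 {k : ℕ} (Q : QuadraticForm ℝ (Fin k → ℝ)) (hQ : Q.PosDef)
    (a b : Fin k → ℝ) (ha : Q a = 1) (hb : Q b = 1) (hab : a + b ≠ 0) :
    (Q (-b) * Q (a + b) + (Q (-b + (a + b)) - Q (-b) - Q (a + b)) + 1 ≠ 0) ∧
    phiAQ Q (a + b) (-b) = a :=
  stmt10_general Q a b ha hb
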